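/- Let d ≥ 2, let θ : (0,∞) → [0,∞) be nondecreasing and locally integrable against ds/s, define θ̂(r) := (1/log²2) ∫_r^{2r} (1/t) ∫_t^{2t} θ(s)/s ds dt, and define Ψ : ℝ^d → ℝ^d by Ψ(X) := X + 3|X| θ̂(|X|) e_d for X ≠ 0 and Ψ(0) := 0. Let r > 0 satisfy θ(4r) < 1/26. Then Ψ maps the sphere ∂B_ρ(0) onto the sphere ∂B_ρ(3ρθ̂(ρ) e_d) for each 0 < ρ ≤ r, the image of the open ball satisfies Ψ(B_r(0)) = B_r(3rθ̂(r) e_d), and consequently ∂(Ψ(B_r(0))) = Ψ(∂B_r(0)). -/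

import Mathlib

open MeasureTheory Set Filter Metric intervalIntegral

noncomputable section

/-- The smoothed Dini parameter `θ̂(r) = (1/log² 2) ∫_r^{2r} (1/t) ∫_t^{2t} θ(s)/s ds dt`. -/
def smoothedTheta (θ : ℝ → ℝ) (r : ℝ) : ℝ :=
  (1 / (Real.log 2) ^ 2) * ∫ t in r..(2 * r), (1 / t) * ∫ s in t..(2 * t), θ s / s

/-- The vertical perturbation map `Ψ(X) = X + 3|X|θ̂(|X|) e_d` (with `Ψ(0) = 0`). -/
def vertPerturb (d : ℕ) (hd : 2 ≤ d) (θ : ℝ → ℝ) (X : EuclideanSpace ℝ (Fin d)) :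
    EuclideanSpace ℝ (Fin d) :=
  X + (3 * ‖X‖ * smoothedTheta θ ‖X‖) •
    EuclideanSpace.single (⟨d - 1, by omega⟩ : Fin d) (1:ℝ)

/-!
On the sphere `‖X‖ = ρ` the map `Ψ` is the translation by `v ρ = 3ρθ̂(ρ) e_d`, so spheres go
to spheres. If `v` is `K`-Lipschitz on `[0, r]` with `K < 1`, the translated spheres of radius
`ρ < r` stay inside `B_r(v r)`, and for `Y` in that ball an intermediate value argument for
`ρ ↦ ‖Y - v ρ‖ - ρ` finds the sphere through `Y`.

For the Lipschitz bound write `ρθ̂(ρ) = (log 2)⁻² ∫₁² G(ρu) u⁻² du` with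
`G(t) = t ∫_t^{2t} θ(s)/s ds`. Monotonicity of `θ` makes `G` nondecreasing with
`G(b) - G(a) ≤ 2θ(2b)(b - a)`, so `ρ ↦ ρθ̂(ρ)` has Lipschitz constant `3θ(4r)` on `[0, r]`
(using `log 2 > 2/3`) and `v` has Lipschitz constant `9θ(4r) < 1/2`.
-/

open scoped NNReal

section RadialShift

variable {E : Type*} [NormedAddCommGroup E]

theorem image_sphere_add_comp_norm (v : ℝ → E) (ρ : ℝ) :
    (fun X => X + v ‖X‖) '' sphere 0 ρ = sphere (v ρ) ρ := by
  have htranslate : EqOn (fun X => X + v ‖X‖) (· + v ρ) (sphere 0 ρ) := fun X hX => by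
    simp only [mem_sphere_zero_iff_norm.mp hX]
  rw [htranslate.image_eq, image_add_right]
  ext Y
  simp [sub_eq_add_neg]

theorem image_ball_add_comp_norm {v : ℝ → E} {K : ℝ≥0} {r : ℝ}
    (hv : LipschitzOnWith K v (Icc 0 r)) (hK : K < 1) :
    (fun X => X + v ‖X‖) '' ball 0 r = ball (v r) r := by
  refine Subset.antisymm ?_ fun Y hY => ?_
  · rintro _ ⟨X, hX, rfl⟩
    rw [mem_ball_zero_iff] at hX
    have hK' : (K : ℝ) < 1 := mod_cast hK
    have hX' : ‖X‖ ∈ Icc 0 r := ⟨norm_nonneg X, hX.le⟩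
    have hshift : ‖v ‖X‖ - v r‖ ≤ K * (r - ‖X‖) := by
      simpa [← dist_eq_norm, Real.dist_eq, abs_of_neg (sub_neg.mpr hX)]
        using hv.dist_le_mul _ hX' _ ⟨hX'.1.trans hX.le, le_rfl⟩
    calc dist (X + v ‖X‖) (v r) ≤ ‖X‖ + ‖v ‖X‖ - v r‖ := by
          rw [dist_eq_norm, add_sub_assoc]; exact norm_add_le _ _
      _ < r := by nlinarith [mul_lt_mul_of_pos_right hK' (sub_pos.mpr hX)]
  · have hr : 0 < r := pos_of_mem_ball hY
    rw [mem_ball, dist_eq_norm] at hY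
    have hcont : ContinuousOn (fun ρ => ‖Y - v ρ‖ - ρ) (Icc 0 r) :=
      (continuousOn_const.sub hv.continuousOn).norm.sub continuousOn_id
    obtain ⟨ρ, ⟨hρ0, hρr⟩, hρ⟩ :=
      intermediate_value_Icc' hr.le hcont (show (0 : ℝ) ∈ Icc _ _ from ⟨by linarith, by simp⟩)
    have hnorm : ‖Y - v ρ‖ = ρ := by linarith [show ‖Y - v ρ‖ - ρ = 0 from hρ]
    have hρr' : ρ < r := hρr.lt_of_ne (by rintro rfl; linarith)
    exact ⟨Y - v ρ, by simpa [hnorm] using hρr', by simp [hnorm]⟩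

end RadialShift

section SmoothedTheta

variable {θ : ℝ → ℝ}

theorem intervalIntegrable_div_of_monotoneOn (hθ : MonotoneOn θ (Ioi 0)) {a b : ℝ}
    (ha : 0 < a) (hb : 0 < b) : IntervalIntegrable (fun s => θ s / s) volume a b := by
  have hpos : uIcc a b ⊆ Ioi 0 := fun s hs => (lt_min ha hb).trans_le hs.1
  simpa only [div_eq_mul_inv] using (hθ.mono hpos).intervalIntegrable.mul_continuousOn
    (continuousOn_inv₀.mono fun s hs => (hpos hs).ne')

theorem MonotoneOn.comp_mul_left_Ioi (hθ : MonotoneOn θ (Ioi 0)) {a : ℝ} (ha : 0 < a) :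
    MonotoneOn (fun v => θ (a * v)) (Ioi 0) :=
  fun _ hx _ hy hxy => hθ (mul_pos ha hx) (mul_pos ha hy) (by gcongr)

theorem integral_div_le_of_monotoneOn (hθ₀ : ∀ s, 0 < s → 0 ≤ θ s)
    (hθ : MonotoneOn θ (Ioi 0)) {a b : ℝ} (ha : 0 < a) (hab : a ≤ b) :
    ∫ s in a..b, θ s / s ≤ θ b / a * (b - a) := by
  have hb := ha.trans_le hab
  calc ∫ s in a..b, θ s / s ≤ ∫ _ in a..b, θ b / a :=
        integral_mono_on hab (intervalIntegrable_div_of_monotoneOn hθ ha hb)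
          intervalIntegrable_const fun s hs =>
            div_le_div₀ (hθ₀ b hb) (hθ (ha.trans_le hs.1) hb hs.2) ha hs.1
    _ = θ b / a * (b - a) := by rw [intervalIntegral.integral_const, smul_eq_mul, mul_comm]

theorem integral_div_comp_mul (f : ℝ → ℝ) {t : ℝ} (ht : t ≠ 0) (a b : ℝ) :
    ∫ s in t * a..t * b, f s / s = ∫ v in a..b, f (t * v) / v := by
  rw [← smul_integral_comp_mul_left, smul_eq_mul, ← intervalIntegral.integral_const_mul]
  congr 1 with v
  rw [← mul_div_assoc, mul_div_mul_left _ _ ht]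

def dyadicIntegral (θ : ℝ → ℝ) (t : ℝ) : ℝ := ∫ s in t..2 * t, θ s / s

theorem dyadicIntegral_eq_integral_comp_mul {t : ℝ} (ht : t ≠ 0) :
    dyadicIntegral θ t = ∫ v in (1 : ℝ)..2, θ (t * v) / v := by
  rw [dyadicIntegral, ← integral_div_comp_mul θ ht, mul_one, mul_comm t]

theorem dyadicIntegral_nonneg (hθ₀ : ∀ s, 0 < s → 0 ≤ θ s) {t : ℝ} (ht : 0 < t) :
    0 ≤ dyadicIntegral θ t :=
  integral_nonneg (by linarith) fun s hs =>
    div_nonneg (hθ₀ s (ht.trans_le hs.1)) (ht.le.trans hs.1)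

theorem dyadicIntegral_le (hθ₀ : ∀ s, 0 < s → 0 ≤ θ s) (hθ : MonotoneOn θ (Ioi 0))
    {t : ℝ} (ht : 0 < t) : dyadicIntegral θ t ≤ θ (2 * t) := by
  have h := integral_div_le_of_monotoneOn hθ₀ hθ ht (by linarith : t ≤ 2 * t)
  rwa [show 2 * t - t = t by ring, div_mul_cancel₀ _ ht.ne'] at h

theorem monotoneOn_dyadicIntegral (hθ : MonotoneOn θ (Ioi 0)) :
    MonotoneOn (dyadicIntegral θ) (Ioi 0) := by
  intro a (ha : 0 < a) b (hb : 0 < b) hab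
  rw [dyadicIntegral_eq_integral_comp_mul ha.ne', dyadicIntegral_eq_integral_comp_mul hb.ne']
  refine integral_mono_on one_le_two
    (intervalIntegrable_div_of_monotoneOn (hθ.comp_mul_left_Ioi ha) one_pos two_pos)
    (intervalIntegrable_div_of_monotoneOn (hθ.comp_mul_left_Ioi hb) one_pos two_pos)
    fun v hv => ?_
  have hv0 : 0 < v := one_pos.trans_le hv.1
  exact div_le_div_of_nonneg_right (hθ (mul_pos ha hv0) (mul_pos hb hv0) (by gcongr)) hv0.le

theorem mul_dyadicIntegral_sub_le (hθ₀ : ∀ s, 0 < s → 0 ≤ θ s) (hθ : MonotoneOn θ (Ioi 0))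
    {a b : ℝ} (ha : 0 < a) (hab : a ≤ b) :
    a * (dyadicIntegral θ b - dyadicIntegral θ a) ≤ θ (2 * b) * (b - a) := by
  have hb := ha.trans_le hab
  have hint : ∀ x y : ℝ, 0 < x → 0 < y → IntervalIntegrable (fun s => θ s / s) volume x y :=
    fun x y hx hy => intervalIntegrable_div_of_monotoneOn hθ hx hy
  -- `∫_a^{2b}` split at `b` and at `2 * a`
  have hsplit : dyadicIntegral θ b - dyadicIntegral θ a =
      (∫ s in 2 * a..2 * b, θ s / s) - ∫ s in a..b, θ s / s := by
    have h₁ := integral_add_adjacent_intervals (hint a b ha hb) (hint b (2 * b) hb (by positivity))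
    have h₂ := integral_add_adjacent_intervals (hint a (2 * a) ha (by positivity))
      (hint (2 * a) (2 * b) (by positivity) (by positivity))
    rw [dyadicIntegral, dyadicIntegral]
    linarith
  have hlow : 0 ≤ ∫ s in a..b, θ s / s := integral_nonneg hab fun s hs =>
    div_nonneg (hθ₀ s (ha.trans_le hs.1)) (ha.le.trans hs.1)
  have hhigh := integral_div_le_of_monotoneOn hθ₀ hθ (by positivity : 0 < 2 * a)
    (by linarith : 2 * a ≤ 2 * b)
  calc a * (dyadicIntegral θ b - dyadicIntegral θ a)
      ≤ a * (θ (2 * b) / (2 * a) * (2 * b - 2 * a)) := by rw [hsplit]; gcongr; linarith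
    _ = θ (2 * b) * (b - a) := by field_simp

theorem monotoneOn_mul_dyadicIntegral (hθ₀ : ∀ s, 0 < s → 0 ≤ θ s) (hθ : MonotoneOn θ (Ioi 0)) :
    MonotoneOn (fun t => t * dyadicIntegral θ t) (Ici 0) := by
  intro a (ha : 0 ≤ a) b (hb : 0 ≤ b) hab
  rcases ha.eq_or_lt with rfl | ha
  · rcases hb.eq_or_lt with rfl | hb
    · exact le_rfl
    · simpa using mul_nonneg hb.le (dyadicIntegral_nonneg hθ₀ hb)
  · exact mul_le_mul hab (monotoneOn_dyadicIntegral hθ ha (ha.trans_le hab) hab)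
      (dyadicIntegral_nonneg hθ₀ ha) hb

theorem mul_dyadicIntegral_sub_mul_le (hθ₀ : ∀ s, 0 < s → 0 ≤ θ s) (hθ : MonotoneOn θ (Ioi 0))
    {a b : ℝ} (ha : 0 ≤ a) (hab : a ≤ b) (hb : 0 < b) :
    b * dyadicIntegral θ b - a * dyadicIntegral θ a ≤ 2 * θ (2 * b) * (b - a) := by
  have hfar : (b - a) * dyadicIntegral θ b ≤ (b - a) * θ (2 * b) :=
    mul_le_mul_of_nonneg_left (dyadicIntegral_le hθ₀ hθ hb) (sub_nonneg.mpr hab)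
  have hnear : a * (dyadicIntegral θ b - dyadicIntegral θ a) ≤ θ (2 * b) * (b - a) := by
    rcases ha.eq_or_lt with rfl | ha
    · simpa using mul_nonneg (hθ₀ _ (by positivity)) hb.le
    · exact mul_dyadicIntegral_sub_le hθ₀ hθ ha hab
  linarith

theorem mul_smoothedTheta_eq (ρ : ℝ) :
    ρ * smoothedTheta θ ρ =
      (Real.log 2 ^ 2)⁻¹ * ∫ u in (1 : ℝ)..2, ρ * u * dyadicIntegral θ (ρ * u) / u ^ 2 := by
  rcases eq_or_ne ρ 0 with rfl | hρ
  · simp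
  have hinner : smoothedTheta θ ρ =
      (Real.log 2 ^ 2)⁻¹ * ∫ u in (1 : ℝ)..2, dyadicIntegral θ (ρ * u) / u := by
    rw [smoothedTheta, one_div, ← integral_div_comp_mul _ hρ, mul_one, mul_comm ρ 2]
    simp only [one_div_mul_eq_div, dyadicIntegral]
  rw [hinner, mul_left_comm, ← intervalIntegral.integral_const_mul]
  congr 1
  refine integral_congr fun u hu => ?_
  rw [uIcc_of_le one_le_two] at hu
  have hu0 : u ≠ 0 := (one_pos.trans_le hu.1).ne'
  field_simp

theorem intervalIntegrable_mul_dyadicIntegral_div_sq (hθ₀ : ∀ s, 0 < s → 0 ≤ θ s)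
    (hθ : MonotoneOn θ (Ioi 0)) {ρ : ℝ} (hρ : 0 ≤ ρ) :
    IntervalIntegrable (fun u => ρ * u * dyadicIntegral θ (ρ * u) / u ^ 2) volume 1 2 := by
  have hmono : MonotoneOn (fun u => ρ * u * dyadicIntegral θ (ρ * u)) (uIcc 1 2) := by
    intro a ha b hb hab
    rw [uIcc_of_le one_le_two] at ha hb
    exact monotoneOn_mul_dyadicIntegral hθ₀ hθ (mul_nonneg hρ (zero_le_one.trans ha.1))
      (mul_nonneg hρ (zero_le_one.trans hb.1)) (by gcongr)
  have hsq : ContinuousOn (fun u : ℝ => (u ^ 2)⁻¹) (uIcc 1 2) :=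
    (continuousOn_pow 2).inv₀ fun u hu => by
      rw [uIcc_of_le one_le_two] at hu
      positivity [hu.1]
  simpa only [div_eq_mul_inv] using hmono.intervalIntegrable.mul_continuousOn hsq

theorem monotoneOn_mul_smoothedTheta (hθ₀ : ∀ s, 0 < s → 0 ≤ θ s) (hθ : MonotoneOn θ (Ioi 0)) :
    MonotoneOn (fun ρ => ρ * smoothedTheta θ ρ) (Ici 0) := by
  intro x (hx : 0 ≤ x) y (hy : 0 ≤ y) hxy
  simp only [mul_smoothedTheta_eq x, mul_smoothedTheta_eq y]
  refine mul_le_mul_of_nonneg_left (integral_mono_on one_le_two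
    (intervalIntegrable_mul_dyadicIntegral_div_sq hθ₀ hθ hx)
    (intervalIntegrable_mul_dyadicIntegral_div_sq hθ₀ hθ hy) fun u hu => ?_) (by positivity)
  have hu0 : 0 ≤ u := zero_le_one.trans hu.1
  exact div_le_div_of_nonneg_right (monotoneOn_mul_dyadicIntegral hθ₀ hθ
    (mul_nonneg hx hu0) (mul_nonneg hy hu0) (by gcongr)) (by positivity)

theorem mul_dyadicIntegral_div_sq_sub_le (hθ₀ : ∀ s, 0 < s → 0 ≤ θ s)
    (hθ : MonotoneOn θ (Ioi 0)) {x y r u : ℝ} (hx : 0 ≤ x) (hxy : x ≤ y) (hy : 0 < y)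
    (hyr : y ≤ r) (hu : u ∈ Icc (1 : ℝ) 2) :
    y * u * dyadicIntegral θ (y * u) / u ^ 2 - x * u * dyadicIntegral θ (x * u) / u ^ 2 ≤
      2 * θ (4 * r) * (y - x) * u⁻¹ := by
  have hu0 : 0 < u := one_pos.trans_le hu.1
  have hθu : θ (2 * (y * u)) ≤ θ (4 * r) :=
    hθ (mem_Ioi.mpr (by positivity)) (mem_Ioi.mpr (by linarith)) (by nlinarith [hu.2])
  calc y * u * dyadicIntegral θ (y * u) / u ^ 2 - x * u * dyadicIntegral θ (x * u) / u ^ 2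
      = (y * u * dyadicIntegral θ (y * u) - x * u * dyadicIntegral θ (x * u)) / u ^ 2 :=
        (sub_div _ _ _).symm
    _ ≤ 2 * θ (4 * r) * (y * u - x * u) / u ^ 2 := by
        gcongr
        refine (mul_dyadicIntegral_sub_mul_le hθ₀ hθ (mul_nonneg hx hu0.le)
          (by gcongr) (mul_pos hy hu0)).trans ?_
        gcongr
        nlinarith
    _ = 2 * θ (4 * r) * (y - x) * u⁻¹ := by field_simp

theorem mul_smoothedTheta_sub_le (hθ₀ : ∀ s, 0 < s → 0 ≤ θ s) (hθ : MonotoneOn θ (Ioi 0))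
    {x y r : ℝ} (hx : 0 ≤ x) (hxy : x ≤ y) (hyr : y ≤ r) :
    y * smoothedTheta θ y - x * smoothedTheta θ x ≤ 3 * θ (4 * r) * (y - x) := by
  rcases (hx.trans hxy).eq_or_lt with hy0 | hy
  · obtain rfl : x = 0 := le_antisymm (hy0 ▸ hxy) hx
    subst hy0
    simp
  set M := 2 * θ (4 * r) * (y - x)
  have hM : 0 ≤ M := mul_nonneg (mul_nonneg zero_le_two (hθ₀ _ (by linarith)))
    (sub_nonneg.mpr hxy)
  have hL : 2 / 3 < Real.log 2 := by linarith [Real.log_two_gt_d9]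
  have hint_y := intervalIntegrable_mul_dyadicIntegral_div_sq hθ₀ hθ (hx.trans hxy)
  have hint_x := intervalIntegrable_mul_dyadicIntegral_div_sq hθ₀ hθ hx
  have hint_inv : IntervalIntegrable (fun u : ℝ => u⁻¹) volume 1 2 :=
    intervalIntegrable_inv_iff.2 (Or.inr (by rw [uIcc_of_le one_le_two]; norm_num))
  rw [mul_smoothedTheta_eq y, mul_smoothedTheta_eq x, ← mul_sub, ← integral_sub hint_y hint_x]
  calc (Real.log 2 ^ 2)⁻¹ * ∫ u in (1 : ℝ)..2,
        (y * u * dyadicIntegral θ (y * u) / u ^ 2 - x * u * dyadicIntegral θ (x * u) / u ^ 2)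
      ≤ (Real.log 2 ^ 2)⁻¹ * ∫ u in (1 : ℝ)..2, M * u⁻¹ := by
        gcongr
        exact integral_mono_on one_le_two (hint_y.sub hint_x) (hint_inv.const_mul M)
          fun u hu => mul_dyadicIntegral_div_sq_sub_le hθ₀ hθ hx hxy hy hyr hu
    _ = M / Real.log 2 := by
        rw [intervalIntegral.integral_const_mul, integral_inv_of_pos one_pos two_pos, div_one]
        field_simp
    _ ≤ 3 * θ (4 * r) * (y - x) := by
        rw [div_le_iff₀ (by linarith)]
        nlinarith

theorem dist_mul_smoothedTheta_le (hθ₀ : ∀ s, 0 < s → 0 ≤ θ s) (hθ : MonotoneOn θ (Ioi 0))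
    {x y r : ℝ} (hx : x ∈ Icc 0 r) (hy : y ∈ Icc 0 r) :
    dist (x * smoothedTheta θ x) (y * smoothedTheta θ y) ≤ 3 * θ (4 * r) * dist x y := by
  wlog hxy : x ≤ y generalizing x y
  · rw [dist_comm, dist_comm x]
    exact this hy hx (le_of_not_ge hxy)
  rw [dist_comm, dist_comm x, Real.dist_eq, Real.dist_eq,
    abs_of_nonneg (sub_nonneg.2 (monotoneOn_mul_smoothedTheta hθ₀ hθ hx.1 hy.1 hxy)),
    abs_of_nonneg (sub_nonneg.2 hxy)]
  exact mul_smoothedTheta_sub_le hθ₀ hθ hx.1 hxy hy.2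

end SmoothedTheta

/-- if `θ(4r) < 1/26`, then `Ψ` maps the sphere `∂B_ρ(0)` onto the sphere
`∂B_ρ(3ρθ̂(ρ)e_d)` for each `0 < ρ ≤ r`, maps the open ball `B_r(0)` onto
`B_r(3rθ̂(r)e_d)`, and consequently `∂(Ψ(B_r(0))) = Ψ(∂B_r(0))`. -/
theorem vertPerturb_maps_spheres_and_balls
    (d : ℕ) (hd : 2 ≤ d)
    (θ : ℝ → ℝ)
    (hθnn : ∀ s : ℝ, 0 < s → 0 ≤ θ s)
    (hθmono : MonotoneOn θ (Set.Ioi (0:ℝ)))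
    (r : ℝ) (hr : 0 < r) (hsmall : θ (4 * r) < 1 / 26) :
    (∀ ρ : ℝ, 0 < ρ → ρ ≤ r →
      vertPerturb d hd θ '' sphere 0 ρ =
        sphere ((3 * ρ * smoothedTheta θ ρ) •
          EuclideanSpace.single (⟨d - 1, by omega⟩ : Fin d) (1:ℝ)) ρ) ∧
    vertPerturb d hd θ '' ball 0 r =
      ball ((3 * r * smoothedTheta θ r) •
        EuclideanSpace.single (⟨d - 1, by omega⟩ : Fin d) (1:ℝ)) r ∧
    frontier (vertPerturb d hd θ '' ball 0 r) = vertPerturb d hd θ '' sphere 0 r := by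
  set e : EuclideanSpace ℝ (Fin d) := EuclideanSpace.single ⟨d - 1, by omega⟩ 1
  set v : ℝ → EuclideanSpace ℝ (Fin d) := fun ρ => (3 * ρ * smoothedTheta θ ρ) • e
  have hΨ : vertPerturb d hd θ = fun X => X + v ‖X‖ := rfl
  have hv : LipschitzOnWith (1 / 2) v (Icc 0 r) := by
    refine LipschitzOnWith.of_dist_le_mul fun x hx y hy => ?_
    have hdist : dist (v x) (v y) = 3 * dist (x * smoothedTheta θ x) (y * smoothedTheta θ y) := by
      simp [v, e, dist_eq_norm, ← sub_smul, norm_smul, ← mul_sub, mul_assoc]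
    have := dist_mul_smoothedTheta_le hθnn hθmono hx hy
    rw [hdist]
    push_cast
    nlinarith [dist_nonneg (x := x) (y := y)]
  have hball : vertPerturb d hd θ '' ball 0 r = ball (v r) r := by
    rw [hΨ]
    exact image_ball_add_comp_norm hv (by norm_num)
  refine ⟨fun ρ _ _ => by rw [hΨ]; exact image_sphere_add_comp_norm v ρ, hball, ?_⟩
  rw [hball, frontier_ball _ hr.ne', hΨ, image_sphere_add_comp_norm]
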